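/- arXiv:1912.03653 — 3 statements merged into one kernel-verified Lean document; each statement's English description precedes it below -/
import Mathlib

section
/- Let (S, d) be a pair consisting of an edge subset S and a divisor d on a weighted multigraph G, and let h be a positive polarization divisor of total degree H. Suppose the pair is semistable, i.e., for every proper subset Y of vertices, Σ_{v∈Y} d_v ≤ g(Y \ S) − 1 + (h(Y)/H)(deg d + |S| + 1 − g) + |δ(Y) \ S|. If Y is a proper subset of vertices with δ(Y) ⊆ S, then equality holds in this inequality for both Y and its complement Y^c. -/
open Finset

variable {V E : Type} [Fintype V] [Fintype E] [DecidableEq V] [DecidableEq E]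

/-- Edges with both endpoints in `Y`. -/
def edgesIn (ends : E → V × V) (Y : Finset V) : Finset E :=
  univ.filter fun e => (ends e).1 ∈ Y ∧ (ends e).2 ∈ Y

/-- Edges with exactly one endpoint in `Y` (the cut `δ(Y)`). -/
def cutEdges (ends : E → V × V) (Y : Finset V) : Finset E :=
  univ.filter fun e => Xor ((ends e).1 ∈ Y) ((ends e).2 ∈ Y)

/-- Arithmetic genus of the subgraph induced on `Y` with the edges of `S` removed:
`g(Y \ S) = |E(Y) \ S| - |Y| + 1 + Σ_{v ∈ Y} w v`. -/
def genusOf (ends : E → V × V) (w : V → ℕ) (Y : Finset V) (S : Finset E) : ℤ :=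
  ((edgesIn ends Y) \ S).card - Y.card + 1 + ∑ v ∈ Y, (w v : ℤ)

/-- The right-hand side of the basic inequality for the pair `(S, d)`, the
polarization `h`, and the proper subcurve `Y`:
`g(Y \ S) - 1 + (h(Y)/H)(deg d + |S| + 1 - g) + |δ(Y) \ S|`. -/
def basicBound (ends : E → V × V) (w : V → ℕ) (h : V → ℤ) (S : Finset E) (d : V → ℤ)
    (Y : Finset V) : ℚ :=
  (genusOf ends w Y S : ℚ) - 1
    + ((∑ v ∈ Y, (h v : ℚ)) / (∑ v, (h v : ℚ)))
        * ((∑ v, (d v : ℚ)) + S.card + 1 - (genusOf ends w univ ∅ : ℚ))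
    + ((cutEdges ends Y) \ S).card

/-- The pair `(S, d)` is semistable with respect to the polarization `h`. -/
def Semistable (ends : E → V × V) (w : V → ℕ) (h : V → ℤ) (S : Finset E) (d : V → ℤ) : Prop :=
  ∀ Y : Finset V, Y.Nonempty → Y ≠ univ →
    (∑ v ∈ Y, (d v : ℚ)) ≤ basicBound ends w h S d Y

/-- The pair `(S, d)` is stable with respect to the polarization `h`. -/
def Stable (ends : E → V × V) (w : V → ℕ) (h : V → ℤ) (S : Finset E) (d : V → ℤ) : Prop :=
  ∀ Y : Finset V, Y.Nonempty → Y ≠ univ →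
    (∑ v ∈ Y, (d v : ℚ)) < basicBound ends w h S d Y

/-!
Summing the basic inequalities for `Y` and `Yᶜ` gives exactly `deg d` on both sides when
`δ(Y) ⊆ S`: the polarization terms add up to `1`, the cut terms vanish, and removing `S`
disconnects `Y` from `Yᶜ`, so `g(Y \ S) + g(Yᶜ \ S) = g - |S| + 1`. Two inequalities whose
sum is an equality are both equalities.
-/

section

variable (ends : E → V × V)

omit [DecidableEq E] in
theorem cutEdges_univ_sdiff (Y : Finset V) : cutEdges ends (univ \ Y) = cutEdges ends Y := by
  ext e
  simp only [cutEdges, mem_filter, mem_univ, true_and, mem_sdiff, xor_not_not]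

theorem card_edgesIn_sdiff_add_card_edgesIn_univ_sdiff {Y : Finset V} {S : Finset E}
    (hcut : cutEdges ends Y ⊆ S) :
    #(edgesIn ends Y \ S) + #(edgesIn ends (univ \ Y) \ S) + #S = Fintype.card E := by
  have hdisj : Disjoint (edgesIn ends Y \ S) (edgesIn ends (univ \ Y) \ S) := by
    simp only [disjoint_left, edgesIn, mem_sdiff, mem_filter, mem_univ, true_and]
    tauto
  have hunion : (edgesIn ends Y \ S) ∪ (edgesIn ends (univ \ Y) \ S) = univ \ S := by
    ext e
    have hcut_e : e ∉ S → ¬Xor ((ends e).1 ∈ Y) ((ends e).2 ∈ Y) := fun heS hx =>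
      heS (hcut (by simpa [cutEdges] using hx))
    simp only [Xor] at hcut_e
    simp only [mem_union, mem_sdiff, edgesIn, mem_filter, mem_univ, true_and]
    tauto
  rw [← card_union_of_disjoint hdisj, hunion, card_sdiff_add_card_eq_card (subset_univ S),
    card_univ]

variable (w : V → ℕ)

theorem genusOf_add_genusOf_univ_sdiff {Y : Finset V} {S : Finset E}
    (hcut : cutEdges ends Y ⊆ S) :
    genusOf ends w Y S + genusOf ends w (univ \ Y) S = genusOf ends w univ ∅ - #S + 1 := by
  have hE := card_edgesIn_sdiff_add_card_edgesIn_univ_sdiff ends hcut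
  have hV := card_sdiff_add_card_eq_card (subset_univ Y)
  have hw := sum_sdiff (f := fun v => (w v : ℤ)) (subset_univ Y)
  have hEuniv : edgesIn ends univ = univ := by ext; simp [edgesIn]
  simp only [genusOf, hEuniv, sdiff_empty, card_univ] at hV ⊢
  omega

theorem basicBound_add_basicBound_univ_sdiff (h : V → ℤ) (d : V → ℤ)
    (hH : ∑ v, (h v : ℚ) ≠ 0) {Y : Finset V} {S : Finset E} (hcut : cutEdges ends Y ⊆ S) :
    basicBound ends w h S d Y + basicBound ends w h S d (univ \ Y) = ∑ v, (d v : ℚ) := by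
  have hgenus : (genusOf ends w Y S : ℚ) + genusOf ends w (univ \ Y) S
      = genusOf ends w univ ∅ - #S + 1 := by
    exact_mod_cast genusOf_add_genusOf_univ_sdiff ends w hcut
  have hpolar : (∑ v ∈ Y, (h v : ℚ)) / (∑ v, (h v : ℚ))
      + (∑ v ∈ univ \ Y, (h v : ℚ)) / (∑ v, (h v : ℚ)) = 1 := by
    rw [← add_div, add_comm, sum_sdiff (subset_univ Y), div_self hH]
  have hcut_empty : cutEdges ends Y \ S = ∅ := sdiff_eq_empty_iff_subset.mpr hcut
  simp only [basicBound, cutEdges_univ_sdiff, hcut_empty, card_empty, Nat.cast_zero]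
  linear_combination hgenus
    + ((∑ v, (d v : ℚ)) + #S + 1 - genusOf ends w univ ∅) * hpolar

end

/-- Lemma 3.2.  If `(S, d)` is semistable and `Y` is a proper subset of
vertices with `δ(Y) ⊆ S`, then the basic inequality is an equality for both `Y` and its
complement `Y^c`. -/
theorem stmt1 (ends : E → V × V) (w : V → ℕ) (d : V → ℤ) (h : V → ℤ)
    (hpos : ∀ v, 0 < h v) (S : Finset E)
    (hss : Semistable ends w h S d)
    (Y : Finset V) (hYne : Y.Nonempty) (hYproper : Y ≠ univ)
    (hcut : cutEdges ends Y ⊆ S) :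
    (∑ v ∈ Y, (d v : ℚ)) = basicBound ends w h S d Y ∧
    (∑ v ∈ univ \ Y, (d v : ℚ)) = basicBound ends w h S d (univ \ Y) := by
  have hH : ∑ v, (h v : ℚ) ≠ 0 :=
    (sum_pos (fun v _ => by exact_mod_cast hpos v) (hYne.mono (subset_univ Y))).ne'
  have hYc_ne : (univ \ Y).Nonempty := sdiff_nonempty.mpr (mt univ_subset_iff.mp hYproper)
  have hYc_proper : univ \ Y ≠ univ :=
    compl_eq_univ_sdiff Y ▸ (compl_ne_univ_iff_nonempty Y).mpr hYne
  refine (add_eq_add_iff_eq_and_eq (hss Y hYne hYproper) (hss _ hYc_ne hYc_proper)).mp ?_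
  rw [basicBound_add_basicBound_univ_sdiff ends w h d hH hcut, add_comm,
    sum_sdiff (subset_univ Y)]
end

section
/- If a pair (S, d) on a weighted multigraph G is stable with respect to a positive polarization h (i.e., the basic inequality Σ_{v∈Y} d_v < g(Y \ S) − 1 + (h(Y)/H)(deg d + |S| + 1 − g) + |δ(Y) \ S| is strict for every proper subset Y of vertices), then the graph G − S obtained by deleting the edges in S is connected. -/
/-! If `G - S` were disconnected, a connected component `Y` of it would be a proper subcurve
with `δ(Y) ⊆ S`. Adding the basic inequalities for `Y` and `Yᶜ`, the polarization terms sum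
to `deg d + |S| + 1 - g` and the cut terms vanish, which forces
`g < g(Y \ S) + g(Yᶜ \ S) + |S| - 1`. But the edges of `E(Y) \ S`, `E(Yᶜ) \ S` and `S` are
disjoint, so `g(Y \ S) + g(Yᶜ \ S) + |S| ≤ g + 1`. -/

open Finset

variable {V E : Type} [Fintype V] [Fintype E] [DecidableEq V] [DecidableEq E]

/-- The simple graph on the vertices of `G` in which two distinct vertices are adjacent
if some edge of the multigraph lying in `E₀` joins them. -/
def spanGraph (ends : E → V × V) (E₀ : Finset E) : SimpleGraph V where
  Adj u v := u ≠ v ∧ ∃ e ∈ E₀, ends e = (u, v) ∨ ends e = (v, u)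
  symm := by
    constructor
    rintro a b ⟨hne, e, he, hor⟩
    exact ⟨hne.symm, e, he, hor.symm⟩
  loopless := by constructor; rintro a ⟨hne, -⟩; exact hne rfl

/-- The underlying simple graph of the multigraph `G - S` obtained by deleting the
edges in `S`. -/
def graphMinus (ends : E → V × V) (S : Finset E) : SimpleGraph V :=
  spanGraph ends (univ \ S)

theorem card_edgesIn_sdiff_add_card_edgesIn_compl_sdiff_add_card_le (ends : E → V × V)
    (Y : Finset V) (S : Finset E) :
    (edgesIn ends Y \ S).card + (edgesIn ends Yᶜ \ S).card + S.card ≤ Fintype.card E := by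
  have hdisj : Disjoint (edgesIn ends Y \ S) (edgesIn ends Yᶜ \ S) := by
    rw [disjoint_left]
    intro e h1 h2
    simp only [edgesIn, mem_sdiff, mem_filter, mem_univ, true_and, mem_compl] at h1 h2
    exact h2.1.1 h1.1.1
  have hdisjS : Disjoint (edgesIn ends Y \ S ∪ edgesIn ends Yᶜ \ S) S :=
    disjoint_union_left.mpr ⟨sdiff_disjoint, sdiff_disjoint⟩
  rw [← card_union_of_disjoint hdisj, ← card_union_of_disjoint hdisjS]
  exact card_le_univ _

theorem genusOf_add_genusOf_compl_add_card_le (ends : E → V × V) (w : V → ℕ)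
    (Y : Finset V) (S : Finset E) :
    genusOf ends w Y S + genusOf ends w Yᶜ S + S.card ≤ genusOf ends w univ ∅ + 1 := by
  have hedges : ((edgesIn ends Y \ S).card + (edgesIn ends Yᶜ \ S).card + S.card : ℤ)
      ≤ Fintype.card E := by
    exact_mod_cast card_edgesIn_sdiff_add_card_edgesIn_compl_sdiff_add_card_le ends Y S
  have hvert : (Y.card + Yᶜ.card : ℤ) = Fintype.card V := by
    exact_mod_cast card_add_card_compl Y
  have hweight := sum_add_sum_compl Y fun v => (w v : ℤ)
  have hall : edgesIn ends (univ : Finset V) \ ∅ = univ := by simp [edgesIn]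
  simp only [genusOf, hall, card_univ]
  linarith

theorem basicBound_add_basicBound_compl (ends : E → V × V) (w : V → ℕ) (h : V → ℤ)
    (S : Finset E) (d : V → ℤ) (hH : ∑ v, (h v : ℚ) ≠ 0) (Y : Finset V) :
    basicBound ends w h S d Y + basicBound ends w h S d Yᶜ =
      genusOf ends w Y S + genusOf ends w Yᶜ S - 1 + (∑ v, (d v : ℚ)) + S.card
        - genusOf ends w univ ∅ + 2 * ((cutEdges ends Y) \ S).card := by
  have hfrac : (∑ v ∈ Y, (h v : ℚ)) / (∑ v, (h v : ℚ))
      + (∑ v ∈ Yᶜ, (h v : ℚ)) / (∑ v, (h v : ℚ)) = 1 := by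
    rw [← add_div, sum_add_sum_compl, div_self hH]
  have hcut : cutEdges ends Yᶜ = cutEdges ends Y := by
    ext e
    simp only [cutEdges, mem_filter, mem_univ, true_and, mem_compl]
    simp only [Xor]
    tauto
  simp only [basicBound, hcut]
  linear_combination
    ((∑ v, (d v : ℚ)) + S.card + 1 - (genusOf ends w univ ∅ : ℚ)) * hfrac

theorem Stable.nonempty_cutEdges_sdiff {ends : E → V × V} {w : V → ℕ} {h : V → ℤ}
    {S : Finset E} {d : V → ℤ} (hst : Stable ends w h S d) (hH : ∑ v, (h v : ℚ) ≠ 0)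
    {Y : Finset V} (hY : Y.Nonempty) (hYuniv : Y ≠ univ) :
    (cutEdges ends Y \ S).Nonempty := by
  rw [nonempty_iff_ne_empty]
  intro hcut
  have hYc : Yᶜ.Nonempty := nonempty_iff_ne_empty.mpr ((compl_eq_empty_iff Y).not.mpr hYuniv)
  have hYcuniv : Yᶜ ≠ univ := (compl_eq_univ_iff Y).not.mpr hY.ne_empty
  have hsum := add_lt_add (hst Y hY hYuniv) (hst Yᶜ hYc hYcuniv)
  rw [sum_add_sum_compl, basicBound_add_basicBound_compl ends w h S d hH, hcut] at hsum
  have hgenus : (genusOf ends w Y S + genusOf ends w Yᶜ S + S.card : ℚ)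
      ≤ genusOf ends w univ ∅ + 1 := by
    exact_mod_cast genusOf_add_genusOf_compl_add_card_le ends w Y S
  simp only [card_empty, Nat.cast_zero, mul_zero, add_zero] at hsum
  linarith

theorem spanGraph_connected_of_forall_cutEdges [Nonempty V] {ends : E → V × V}
    {E₀ : Finset E}
    (hcut : ∀ Y : Finset V, Y.Nonempty → Y ≠ univ → (cutEdges ends Y ∩ E₀).Nonempty) :
    (spanGraph ends E₀).Connected := by
  classical
  set G := spanGraph ends E₀
  have hadj : ∀ e ∈ E₀, (ends e).1 ≠ (ends e).2 → G.Adj (ends e).1 (ends e).2 :=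
    fun e he hne => ⟨hne, e, he, Or.inl rfl⟩
  refine ⟨fun u v => ?_⟩
  by_contra huv
  set Y : Finset V := univ.filter (G.Reachable u)
  have hmem : ∀ x, x ∈ Y ↔ G.Reachable u x := by simp [Y]
  have hYuniv : Y ≠ univ := fun hY => huv ((hmem v).mp (hY ▸ mem_univ v))
  obtain ⟨e, he⟩ := hcut Y ⟨u, (hmem u).mpr .rfl⟩ hYuniv
  simp only [cutEdges, mem_inter, mem_filter, mem_univ, true_and, hmem] at he
  obtain ⟨hxor | hxor, he₀⟩ := he
  · exact hxor.2 (hxor.1.trans (hadj e he₀ fun h => hxor.2 (h ▸ hxor.1)).reachable)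
  · exact hxor.2 (hxor.1.trans (hadj e he₀ fun h => hxor.2 (h ▸ hxor.1)).symm.reachable)

theorem stmt2_general [Nonempty V] (ends : E → V × V) (w : V → ℕ) (d : V → ℤ) (h : V → ℤ)
    (hpos : ∀ v, 0 < h v) (S : Finset E)
    (hst : Stable ends w h S d) :
    (graphMinus ends S).Connected := by
  have hH : ∑ v, (h v : ℚ) ≠ 0 :=
    (sum_pos (fun v _ => by exact_mod_cast hpos v) univ_nonempty).ne'
  refine spanGraph_connected_of_forall_cutEdges fun Y hY hYuniv => ?_
  obtain ⟨e, he⟩ := hst.nonempty_cutEdges_sdiff hH hY hYuniv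
  exact ⟨e, by simpa using he⟩

/-- Corollary 3.3.  If the pair `(S, d)` is stable with respect to a
positive polarization `h`, then the graph `G - S` obtained by deleting the edges of `S`
is connected. -/
theorem stmt2 [Nonempty V] (ends : E → V × V) (w : V → ℕ) (d : V → ℤ) (h : V → ℤ)
    (hpos : ∀ v, 0 < h v) (S : Finset E)
    (hGconn : (graphMinus ends (∅ : Finset E)).Connected)
    (hst : Stable ends w h S d) :
    (graphMinus ends S).Connected :=
  stmt2_general ends w d h hpos S hst
end

section
/- Let G be a weighted multigraph of genus g, S ⊆ E(G), and d a divisor on G with deg d + |S| = g. The pair (S, d) is stable with respect to any positive polarization h (i.e., for every proper subset Y of vertices, Σ_{v∈Y} d_v ≤ g(Y \ S) − 1 + h(Y)/H + |δ(Y)\S| holds strictly) if and only if for every proper subset Y of vertices, g(Y^c \ S) ≤ Σ_{w∈Y^c} d_w. -/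
/-!
Because `0 < h(Y)/H < 1` and every other term of the basic inequality is an integer, the strict
inequality `d(Y) < g(Y \ S) - 1 + h(Y)/H + |δ(Y) \ S|` says exactly
`d(Y) ≤ g(Y \ S) - 1 + |δ(Y) \ S|`. Counting edges gives
`g(Y \ S) + g(Yᶜ \ S) + |δ(Y) \ S| + |S| = g + 1`, and `d(Y) + d(Yᶜ) = g - |S|`, so this is
`g(Yᶜ \ S) ≤ d(Yᶜ)`.
-/

open Finset

variable {V E : Type} [Fintype V] [Fintype E] [DecidableEq V] [DecidableEq E]

section OrderedField

variable {K : Type*} [Field K] [LinearOrder K] [IsStrictOrderedRing K]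

theorem Int.cast_lt_cast_add_iff_le {a b : ℤ} {t : K} (ht₀ : 0 < t) (ht₁ : t < 1) :
    (a : K) < b + t ↔ a ≤ b := by
  constructor
  · intro hlt
    have : (a : K) < ((b + 1 : ℤ) : K) := by push_cast; linarith
    exact Int.lt_add_one_iff.mp (Int.cast_lt.mp this)
  · intro hle
    have : (a : K) ≤ b := Int.cast_le.mpr hle
    linarith

theorem Finset.sum_div_sum_univ_mem_Ioo {ι : Type*} [Fintype ι] {h : ι → K}
    (hpos : ∀ i, 0 < h i) {Y : Finset ι} (hY : Y.Nonempty) (hYu : Y ≠ univ) :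
    (∑ i ∈ Y, h i) / ∑ i, h i ∈ Set.Ioo 0 1 := by
  obtain ⟨x, -, hx⟩ := exists_of_ssubset (ssubset_univ_iff.mpr hYu)
  have hYsum : 0 < ∑ i ∈ Y, h i := sum_pos (fun i _ => hpos i) hY
  have hlt : ∑ i ∈ Y, h i < ∑ i, h i :=
    sum_lt_sum_of_subset (subset_univ Y) (mem_univ x) hx (hpos x)
      fun i _ _ => (hpos i).le
  exact ⟨div_pos hYsum (hYsum.trans hlt), (div_lt_one (hYsum.trans hlt)).mpr hlt⟩

end OrderedField

theorem card_edgesIn_sdiff_add_edgesIn_compl_sdiff_add_cutEdges_sdiff (ends : E → V × V)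
    (Y : Finset V) (S : Finset E) :
    ((edgesIn ends Y) \ S).card + ((edgesIn ends (univ \ Y)) \ S).card
      + ((cutEdges ends Y) \ S).card + S.card = Fintype.card E := by
  simp only [edgesIn, cutEdges, sdiff_eq_filter, filter_filter, card_filter]
  rw [← filter_mem_eq_inter.trans (univ_inter S), card_filter, ← card_univ, card_eq_sum_ones,
    ← sum_add_distrib, ← sum_add_distrib, ← sum_add_distrib]
  refine sum_congr rfl fun e _ => ?_
  by_cases ha : (ends e).1 ∈ Y <;> by_cases hb : (ends e).2 ∈ Y <;> by_cases hs : e ∈ S <;>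
    simp [ha, hb, hs]

theorem genusOf_add_genusOf_compl (ends : E → V × V) (w : V → ℕ) (Y : Finset V)
    (S : Finset E) :
    genusOf ends w Y S + genusOf ends w (univ \ Y) S
      + ((cutEdges ends Y) \ S).card + S.card = genusOf ends w univ ∅ + 1 := by
  have hE := card_edgesIn_sdiff_add_edgesIn_compl_sdiff_add_cutEdges_sdiff ends Y S
  have hV : Y.card + (univ \ Y).card = Fintype.card V := by
    rw [add_comm, card_sdiff_add_card_eq_card (subset_univ Y), card_univ]
  have hw : ∑ v ∈ univ \ Y, (w v : ℤ) + ∑ v ∈ Y, (w v : ℤ) = ∑ v, (w v : ℤ) :=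
    sum_sdiff (subset_univ Y)
  have hEu : edgesIn ends univ = univ := by simp [edgesIn]
  simp only [genusOf, hEu, sdiff_empty, card_univ]
  zify at hE hV
  linarith

/-- In degree `g`, the pair `(S, d)` is stable (the basic inequality,
which in degree `g` reads `Σ_{v∈Y} d_v < g(Y \ S) - 1 + h(Y)/H + |δ(Y) \ S|`, is strict
for every proper subset `Y` of vertices) if and only if `g(Y^c \ S) ≤ Σ_{w ∈ Y^c} d_w`
for every proper subset `Y` of vertices. -/
theorem stmt4 (ends : E → V × V) (w : V → ℕ) (d : V → ℤ) (h : V → ℤ)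
    (hpos : ∀ v, 0 < h v) (S : Finset E)
    (hdeg : (∑ v, d v) + S.card = genusOf ends w univ ∅) :
    (∀ Y : Finset V, Y.Nonempty → Y ≠ univ →
        (∑ v ∈ Y, (d v : ℚ)) < (genusOf ends w Y S : ℚ) - 1
          + (∑ v ∈ Y, (h v : ℚ)) / (∑ v, (h v : ℚ))
          + ((cutEdges ends Y) \ S).card)
      ↔ (∀ Y : Finset V, Y.Nonempty → Y ≠ univ →
        genusOf ends w (univ \ Y) S ≤ ∑ v ∈ univ \ Y, d v) := by
  refine forall_congr' fun Y => forall_congr' fun hY => forall_congr' fun hYu => ?_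
  obtain ⟨ht₀, ht₁⟩ :=
    sum_div_sum_univ_mem_Ioo (fun v => Int.cast_pos.mpr (hpos v) : ∀ v, (0 : ℚ) < h v) hY hYu
  have hsplit : ∑ v ∈ univ \ Y, d v + ∑ v ∈ Y, d v = ∑ v, d v := sum_sdiff (subset_univ Y)
  have hcompl := genusOf_add_genusOf_compl ends w Y S
  rw [add_right_comm, ← Int.cast_sum, ← Int.cast_natCast, ← Int.cast_one, ← Int.cast_sub,
    ← Int.cast_add, Int.cast_lt_cast_add_iff_le ht₀ ht₁]
  omega
end
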